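/- arXiv:0912.4844 — 2 statements merged into one kernel-verified Lean document; each statement's English description precedes it below -/
import Mathlib

section
/- Let Γ be a commutative divisible group and k = ℚ. Then every finite-dimensional irreducible ℚ-linear representation of Γ is trivial (one-dimensional with trivial action); equivalently, the pro-algebraic completion of Γ over ℚ is pro-unipotent. -/
/-!
Let `S` be the `ℚ`-algebra generated by `ρ(Γ)`. It is commutative, and by Schur's lemma every
nonzero element of `S` is injective on `V`, so `S` is a number field and `ρ` is a homomorphism
`Γ → Sˣ` whose image consists of elements with `n`-th roots for every `n`. Such an element has
`v`-adic valuation divisible by every `n`, hence zero, at every prime `v`, so it and all its roots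
are units of `𝓞 S`. By Dirichlet's unit theorem this unit group is finitely generated, and in a
finitely generated commutative group only `1` has roots of all orders. So `ρ` is trivial, and a
trivial irreducible representation is a line.
-/

def HasAllRoots {M : Type*} [Monoid M] (x : M) : Prop :=
  ∀ n : ℕ, 0 < n → ∃ y : M, y ^ n = x

theorem HasAllRoots.map {M N F : Type*} [Monoid M] [Monoid N] [FunLike F M N]
    [MonoidHomClass F M N] (f : F) {x : M} (hx : HasAllRoots x) : HasAllRoots (f x) := fun n hn =>
  let ⟨y, hy⟩ := hx n hn
  ⟨f y, by rw [← map_pow, hy]⟩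

theorem HasAllRoots.eq_one_of_finite {G : Type*} [Group G] [Finite G] {x : G}
    (hx : HasAllRoots x) : x = 1 := by
  obtain ⟨y, rfl⟩ := hx (Nat.card G) Nat.card_pos
  exact pow_card_eq_one'

theorem HasAllRoots.eq_one_of_int {x : Multiplicative ℤ} (hx : HasAllRoots x) : x = 1 := by
  obtain ⟨y, hy⟩ := hx (x.toAdd.natAbs + 1) (Nat.succ_pos _)
  apply Multiplicative.toAdd.injective
  refine Int.eq_zero_of_abs_lt_dvd (m := (x.toAdd.natAbs + 1 : ℕ)) ⟨y.toAdd, ?_⟩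
    (by rw [Int.abs_eq_natAbs]; omega)
  simpa [nsmul_eq_mul] using (congrArg Multiplicative.toAdd hy).symm

theorem HasAllRoots.eq_one {G : Type*} [CommGroup G] [Group.FG G] {x : G}
    (hx : HasAllRoots x) : x = 1 := by
  obtain ⟨ι, _, _, _, p, hp, e, ⟨f⟩⟩ := CommGroup.equiv_free_prod_prod_multiplicative_zmod G
  have : ∀ i, NeZero (p i ^ e i) := fun i => ⟨pow_ne_zero _ (hp i).ne_zero⟩
  apply f.injective
  rw [map_one]
  refine Prod.ext (funext fun i => ?_) ((hx.map f).map (MonoidHom.snd _ _)).eq_one_of_finite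
  exact (((hx.map f).map (MonoidHom.fst _ _)).map (Pi.evalMonoidHom _ i)).eq_one_of_int

theorem IsDedekindDomain.HeightOneSpectrum.mem_range_unitsMap_of_forall_valuationOfNeZero_eq_one
    {R K : Type*} [CommRing R] [IsDedekindDomain R] [Field K] [Algebra R K] [IsFractionRing R K]
    {x : Kˣ} (hx : ∀ v : HeightOneSpectrum R, v.valuationOfNeZero x = 1) :
    x ∈ (Units.map (algebraMap R K : R →* K)).range := by
  have integral (y : Kˣ) (hy : ∀ v : HeightOneSpectrum R, v.valuationOfNeZero y = 1) :
      (y : K) ∈ (algebraMap R K).range :=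
    mem_integers_of_valuation_le_one K _ fun v => by rw [← valuationOfNeZero_eq, hy v]; rfl
  obtain ⟨r, hr⟩ := integral x hx
  obtain ⟨s, hs⟩ := integral x⁻¹ fun v => by rw [map_inv, hx v, inv_one]
  have hrs : r * s = 1 := IsFractionRing.injective R K (by simp [hr, hs])
  exact ⟨⟨r, s, hrs, mul_comm s r ▸ hrs⟩, Units.ext hr⟩

open NumberField in
theorem NumberField.eq_one_of_hasAllRoots {K : Type*} [Field K] [NumberField K] {x : Kˣ}
    (hx : HasAllRoots x) : x = 1 := by
  let ι : (𝓞 K)ˣ →* Kˣ := Units.map (algebraMap (𝓞 K) K : 𝓞 K →* K)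
  have hval (v : IsDedekindDomain.HeightOneSpectrum (𝓞 K)) : v.valuationOfNeZero x = 1 :=
    (hx.map _).eq_one_of_int
  have unit_of_root (y : Kˣ) (n : ℕ) (hn : 0 < n) (hy : y ^ n = x) : y ∈ ι.range :=
    IsDedekindDomain.HeightOneSpectrum.mem_range_unitsMap_of_forall_valuationOfNeZero_eq_one
      fun v => (pow_eq_one_iff.mp (by rw [← map_pow, hy, hval v])).resolve_right hn.ne'
  have hι : Function.Injective ι := Units.map_injective (IsFractionRing.injective (𝓞 K) K)
  obtain ⟨u, rfl⟩ := unit_of_root x 1 one_pos (pow_one x)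
  have : Group.FG (𝓞 K)ˣ := Group.fg_iff_monoid_fg.mpr inferInstance
  suffices HasAllRoots u by rw [this.eq_one, map_one]
  intro n hn
  obtain ⟨y, hy⟩ := hx n hn
  obtain ⟨w, rfl⟩ := unit_of_root y n hn hy
  exact ⟨w, hι (by rwa [map_pow])⟩

namespace Representation

variable {k G V : Type*} [Field k] [AddCommGroup V] [Module k V]

theorem injective_of_forall_commute [Monoid G] {ρ : Representation k G V}
    (hirr : ∀ U : Submodule k V, (∀ g : G, U.map (ρ g) ≤ U) → U = ⊥ ∨ U = ⊤)
    {f : Module.End k V} (hf : ∀ g, Commute f (ρ g)) (hf0 : f ≠ 0) : Function.Injective f := by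
  have hker (g : G) : (LinearMap.ker f).map (ρ g) ≤ LinearMap.ker f := by
    rintro _ ⟨v, hv, rfl⟩
    rw [SetLike.mem_coe, LinearMap.mem_ker] at hv
    rw [LinearMap.mem_ker, ← Module.End.mul_apply, (hf g).eq, Module.End.mul_apply, hv, map_zero]
  rcases hirr _ hker with h | h
  · exact LinearMap.ker_eq_bot.mp h
  · exact absurd (LinearMap.ker_eq_top.mp h) hf0

theorem isField_adjoin_range [CommMonoid G] [FiniteDimensional k V] [Nontrivial V]
    {ρ : Representation k G V}
    (hirr : ∀ U : Submodule k V, (∀ g : G, U.map (ρ g) ≤ U) → U = ⊥ ∨ U = ⊤) :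
    IsField (Algebra.adjoin k (Set.range ρ)) := by
  have commute_adjoin {a b : Module.End k V} (ha : a ∈ Algebra.adjoin k (Set.range ρ))
      (hb : b ∈ Algebra.adjoin k (Set.range ρ)) : Commute a b := by
    refine Algebra.commute_of_mem_adjoin_of_forall_mem_commute hb fun _ ⟨g, hg⟩ => ?_
    refine (Algebra.commute_of_mem_adjoin_of_forall_mem_commute ha fun _ ⟨h, hh⟩ => ?_).symm
    rw [← hg, ← hh]
    exact (Commute.all g h).map ρ
  refine ⟨exists_pair_ne _, fun a b => Subtype.ext (commute_adjoin a.2 b.2).eq, fun {a} ha => ?_⟩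
  have ha_inj : Function.Injective (a : Module.End k V) :=
    injective_of_forall_commute hirr (fun g => commute_adjoin a.2 (Algebra.subset_adjoin ⟨g, rfl⟩))
      fun h => ha (Subtype.ext h)
  have hmul_inj : Function.Injective (LinearMap.mulLeft k a) := fun p q hpq =>
    Subtype.ext <| LinearMap.ext fun v => ha_inj (DFunLike.congr_fun (congrArg Subtype.val hpq) v)
  exact LinearMap.injective_iff_surjective.mp hmul_inj 1

theorem finrank_eq_one_of_forall_eq_id [Monoid G] [Nontrivial V] {ρ : Representation k G V}
    (hirr : ∀ U : Submodule k V, (∀ g : G, U.map (ρ g) ≤ U) → U = ⊥ ∨ U = ⊤)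
    (hρ : ∀ g, ρ g = LinearMap.id) : Module.finrank k V = 1 := by
  obtain ⟨v, hv⟩ := exists_ne (0 : V)
  rcases hirr (k ∙ v) fun g => by rw [hρ g, Submodule.map_id] with h | h
  · exact absurd (Submodule.span_singleton_eq_bot.mp h) hv
  · rw [← finrank_top k V, ← h, finrank_span_singleton hv]

end Representation

/-- Let `Γ` be a commutative divisible group.  Then every
finite-dimensional irreducible `ℚ`-linear representation of `Γ` is trivial:
it is one-dimensional and every element acts as the identity.  (Equivalently, the
pro-algebraic completion of `Γ` over `ℚ` is pro-unipotent.) -/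
theorem irreducible_rep_of_divisible_commGroup_is_trivial
    (Γ : Type*) [CommGroup Γ]
    (hdiv : ∀ (γ : Γ) (n : ℕ), 0 < n → ∃ δ : Γ, δ ^ n = γ)
    (V : Type*) [AddCommGroup V] [Module ℚ V] [FiniteDimensional ℚ V] [Nontrivial V]
    (ρ : Representation ℚ Γ V)
    (hirr : ∀ U : Submodule ℚ V, (∀ γ : Γ, U.map (ρ γ) ≤ U) → U = ⊥ ∨ U = ⊤) :
    Module.finrank ℚ V = 1 ∧ ∀ γ : Γ, ρ γ = LinearMap.id := by
  set S := Algebra.adjoin ℚ (Set.range ρ)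
  let : Field S := (Representation.isField_adjoin_range hirr).toField
  -- the `Module ℚ S` of the field structure is not the subalgebra's, but `ℚ`-module structures
  -- are unique
  have : NumberField S :=
    { to_charZero := charZero_of_injective_algebraMap (algebraMap ℚ S).injective
      to_finiteDimensional := by
        convert (inferInstance : FiniteDimensional ℚ S)
        exact Subsingleton.elim _ _ }
  let φ : Γ →* Sˣ := (Units.map (ρ.codRestrict S fun γ => Algebra.subset_adjoin ⟨γ, rfl⟩)).comp
    toUnits.toMonoidHom
  have hρ (γ : Γ) : ρ γ = LinearMap.id :=
    congrArg (fun u : Sˣ => ((u : S) : Module.End ℚ V))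
      (NumberField.eq_one_of_hasAllRoots (HasAllRoots.map φ (hdiv γ)))
  exact ⟨Representation.finrank_eq_one_of_forall_eq_id hirr hρ, hρ⟩
end

section
/- For each q ≥ 0, the cubical abelian group n ↦ □(n,q) of degree-q polynomial differential forms on the standard n-cube satisfies the cubical Kan extension property with respect to boundary inclusions: the unique map □(·,q) → * is a trivial fibration of cubical sets, i.e. given elements x_i^ε ∈ □(n−1,q) for 1 ≤ i ≤ n, ε ∈ {0,1} satisfying the compatibility relations ∂_i^{ε₁} x_j^{ε₂} = ∂_{j−1}^{ε₂} x_i^{ε₁} for i < j, there exists y ∈ □(n,q) with ∂_i^ε y = x_i^ε for all i, ε. -/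
/-- The degree-`q` part `□(n,q)` of the algebra of polynomial differential forms on the
standard `n`-cube over `k`: a form is a family of polynomial coefficients indexed by the
`q`-element subsets `S` of the variables (the component of `dt_S`). -/
abbrev CubeForm (k : Type*) [Field k] (n q : ℕ) : Type _ :=
  {S : Finset (Fin n) // S.card = q} → MvPolynomial (Fin n) k

/-- The cubical face map `∂_i^ε : □(n+1,q) → □(n,q)` : substitute `t_i = ε`
(so the components containing `dt_i` die), and relabel the remaining variables by the
order-preserving bijection `Fin n ≃ Fin (n+1) \ {i}` (given by `Fin.succAbove i`). -/
noncomputable def cubeFace {k : Type*} [Field k] {n q : ℕ} (i : Fin (n + 1)) (ε : Bool)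
    (ω : CubeForm k (n + 1) q) : CubeForm k n q :=
  fun S =>
    MvPolynomial.aeval
      (fun j : Fin (n + 1) =>
        if _ : (j : ℕ) < (i : ℕ) then
          MvPolynomial.X (⟨j, by have := i.isLt; omega⟩ : Fin n)
        else if hj : j = i then (if ε then 1 else 0)
        else
          MvPolynomial.X
            (⟨(j : ℕ) - 1, by
              have := j.isLt
              have : (j : ℕ) ≠ (i : ℕ) := fun hh => hj (Fin.ext hh)
              omega⟩ : Fin n))
      (ω ⟨S.1.map (Fin.succAboveEmb i), by rw [Finset.card_map]; exact S.2⟩)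

/-!
A `q`-form is a family of coefficients, one polynomial for each `dt_T` with `#T = q`, and the
boundary conditions on the coefficient of `dt_T` only concern the faces `t_i = ε` with `i ∉ T`.
Pulling each `x_i^ε` back to the cube by the degeneracy `s_i`, the problem becomes, coefficient
by coefficient, an interpolation problem for one polynomial `P`: prescribe `P|_{t_i = ε} = Q_i^ε`
for `i ∉ T`, where `Q_i^ε` does not involve `t_i` and, by the cubical identities and the
compatibility of the `x_i^ε`, `Q_j^{ε₂}|_{t_i = ε₁} = Q_i^{ε₁}|_{t_j = ε₂}`. Such a `P` is built one
variable at a time: `P + (1 - t_a)(Q_a^0 - P|_{t_a = 0}) + t_a (Q_a^1 - P|_{t_a = 1})` has the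
prescribed faces at `t_a = 0, 1` and keeps those already achieved.
-/

open MvPolynomial

section FaceEval

variable {R σ τ : Type*} [CommRing R] [DecidableEq σ]

/-- Restriction to the face `t_i = ε`, without relabelling the variables as `cubeFace` does. -/
noncomputable def faceEval (i : σ) (ε : Bool) : MvPolynomial σ R →ₐ[R] MvPolynomial σ R :=
  aeval (Function.update X i (if ε then 1 else 0))

@[simp]
lemma faceEval_X_self (i : σ) (ε : Bool) :
    faceEval i ε (X i : MvPolynomial σ R) = if ε then 1 else 0 := by
  simp [faceEval]

@[simp]
lemma faceEval_X_of_ne {i j : σ} (h : j ≠ i) (ε : Bool) :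
    faceEval i ε (X j : MvPolynomial σ R) = X j := by
  simp [faceEval, h]

lemma faceEval_faceEval_self (i : σ) (ε ε' : Bool) (p : MvPolynomial σ R) :
    faceEval i ε' (faceEval i ε p) = faceEval i ε p := by
  have : (faceEval i ε').comp (faceEval i ε) = (faceEval i ε : MvPolynomial σ R →ₐ[R] _) := by
    refine algHom_ext fun s => ?_
    rcases eq_or_ne s i with rfl | hs
    · cases ε <;> simp
    · simp [hs]
  exact AlgHom.congr_fun this p

lemma faceEval_comm {i j : σ} (h : i ≠ j) (ε₁ ε₂ : Bool) (p : MvPolynomial σ R) :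
    faceEval i ε₁ (faceEval j ε₂ p) = faceEval j ε₂ (faceEval i ε₁ p) := by
  have : (faceEval i ε₁).comp (faceEval j ε₂) =
      ((faceEval j ε₂).comp (faceEval i ε₁) : MvPolynomial σ R →ₐ[R] _) := by
    refine algHom_ext fun s => ?_
    rcases eq_or_ne s i with rfl | hsi
    · cases ε₁ <;> simp [h]
    rcases eq_or_ne s j with rfl | hsj
    · cases ε₂ <;> simp [hsi]
    · simp [hsi, hsj]
  exact AlgHom.congr_fun this p

lemma faceEval_rename_of_forall_ne (f : τ → σ) {i : σ} (h : ∀ s, f s ≠ i) (ε : Bool)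
    (p : MvPolynomial τ R) : faceEval i ε (rename f p) = rename f p := by
  have : (faceEval i ε).comp (rename f) = (rename f : MvPolynomial τ R →ₐ[R] _) :=
    algHom_ext fun s => by simp [h s]
  exact AlgHom.congr_fun this p

lemma faceEval_rename [DecidableEq τ] {f : τ → σ} (hf : Function.Injective f) (a : τ)
    (ε : Bool) (p : MvPolynomial τ R) :
    faceEval (f a) ε (rename f p) = rename f (faceEval a ε p) := by
  have : (faceEval (f a) ε).comp (rename f) =
      ((rename f).comp (faceEval a ε) : MvPolynomial τ R →ₐ[R] _) := by
    refine algHom_ext fun s => ?_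
    rcases eq_or_ne s a with rfl | hs
    · cases ε <;> simp
    · simp [hs, hf.ne hs]
  exact AlgHom.congr_fun this p

theorem exists_faceEval_eq (s : Finset σ) (Q : σ → Bool → MvPolynomial σ R)
    (hQ : ∀ i ∈ s, ∀ ε ε', faceEval i ε' (Q i ε) = Q i ε)
    (hC : ∀ i ∈ s, ∀ j ∈ s, i ≠ j → ∀ ε₁ ε₂,
      faceEval i ε₁ (Q j ε₂) = faceEval j ε₂ (Q i ε₁)) :
    ∃ P, ∀ i ∈ s, ∀ ε, faceEval i ε P = Q i ε := by
  induction s using Finset.induction_on with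
  | empty => exact ⟨0, by simp⟩
  | insert a s _ ih =>
    obtain ⟨P, hP⟩ := ih (fun i hi => hQ i (Finset.mem_insert_of_mem hi))
      (fun i hi j hj => hC i (Finset.mem_insert_of_mem hi) j (Finset.mem_insert_of_mem hj))
    refine ⟨P + (1 - X a) * (Q a false - faceEval a false P) +
      X a * (Q a true - faceEval a true P), fun i hi ε => ?_⟩
    rcases eq_or_ne i a with rfl | hia
    · have hQa := hQ i (Finset.mem_insert_self i s)
      cases ε <;> simp [faceEval_faceEval_self, hQa]
    · have hi' : i ∈ s := Finset.mem_of_mem_insert_of_ne hi hia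
      have hQi : ∀ ε', faceEval i ε (Q a ε') = faceEval a ε' (Q i ε) := fun ε' =>
        hC i hi a (Finset.mem_insert_self a s) hia ε ε'
      have hPi : ∀ ε', faceEval i ε (faceEval a ε' P) = faceEval a ε' (Q i ε) := fun ε' => by
        rw [faceEval_comm hia, hP i hi' ε]
      simp only [map_add, map_mul, map_sub, map_one, faceEval_X_of_ne (Ne.symm hia), hQi, hPi,
        hP i hi' ε]
      ring

end FaceEval

section CubeForm

variable {k : Type*} [Field k] {m q : ℕ}

noncomputable def preimageSuccAbove (i : Fin (m + 1)) (T : Finset (Fin (m + 1))) :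
    Finset (Fin m) :=
  T.preimage i.succAbove Fin.succAbove_right_injective.injOn

lemma map_preimageSuccAbove {i : Fin (m + 1)} {T : Finset (Fin (m + 1))} (h : i ∉ T) :
    (preimageSuccAbove i T).map i.succAboveEmb = T := by
  ext j
  simp only [preimageSuccAbove, Finset.mem_map, Finset.mem_preimage, Fin.succAboveEmb_apply]
  refine ⟨fun ⟨s, hs, hsj⟩ => hsj ▸ hs, fun hj => ?_⟩
  obtain ⟨s, rfl⟩ := Fin.exists_succAbove_eq (ne_of_mem_of_not_mem hj h)
  exact ⟨s, hj, rfl⟩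

lemma card_preimageSuccAbove {i : Fin (m + 1)} {T : Finset (Fin (m + 1))} (h : i ∉ T) :
    (preimageSuccAbove i T).card = T.card := by
  conv_rhs => rw [← map_preimageSuccAbove h]
  exact (Finset.card_map _).symm

/-- The degeneracy `s_i : □(m,q) → □(m+1,q)`, pullback along the projection forgetting `t_i`. -/
noncomputable def cubeDegen (i : Fin (m + 1)) (ω : CubeForm k m q) : CubeForm k (m + 1) q :=
  fun T => if h : i ∈ T.1 then 0 else
    rename i.succAbove (ω ⟨preimageSuccAbove i T.1, (card_preimageSuccAbove h).trans T.2⟩)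

lemma cubeDegen_of_notMem {i : Fin (m + 1)} {T : {S : Finset (Fin (m + 1)) // S.card = q}}
    (h : i ∉ T.1) (ω : CubeForm k m q) :
    cubeDegen i ω T =
      rename i.succAbove (ω ⟨preimageSuccAbove i T.1, (card_preimageSuccAbove h).trans T.2⟩) :=
  dif_neg h

lemma cubeDegen_injective (i : Fin (m + 1)) :
    Function.Injective (cubeDegen (k := k) (q := q) i) := by
  intro ω ω' h
  funext S
  have hi : i ∉ S.1.map i.succAboveEmb := by
    simp [Fin.succAbove_ne]
  have hS : (⟨preimageSuccAbove i (S.1.map i.succAboveEmb),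
      (card_preimageSuccAbove hi).trans (S.1.card_map _ |>.trans S.2)⟩ :
        {S : Finset (Fin m) // S.card = q}) = S :=
    Subtype.ext (Finset.preimage_map _ _)
  have := congrFun h ⟨S.1.map i.succAboveEmb, (S.1.card_map _).trans S.2⟩
  rw [cubeDegen_of_notMem hi, cubeDegen_of_notMem hi, hS] at this
  exact rename_injective _ Fin.succAbove_right_injective this

lemma faceEval_cubeDegen_self (i : Fin (m + 1)) (ε : Bool) (ω : CubeForm k m q)
    (T : {S : Finset (Fin (m + 1)) // S.card = q}) :
    faceEval i ε (cubeDegen i ω T) = cubeDegen i ω T := by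
  unfold cubeDegen
  split
  · exact map_zero _
  · exact faceEval_rename_of_forall_ne _ (Fin.succAbove_ne i) ε _

lemma cubeDegen_cubeFace {i : Fin (m + 1)} {T : {S : Finset (Fin (m + 1)) // S.card = q}}
    (h : i ∉ T.1) (ε : Bool) (ω : CubeForm k (m + 1) q) :
    cubeDegen i (cubeFace i ε ω) T = faceEval i ε (ω T) := by
  rw [cubeDegen_of_notMem h, cubeFace, comp_aeval_apply, faceEval]
  congr 2
  · funext j
    rcases lt_trichotomy j i with hji | rfl | hij
    · rw [dif_pos (Fin.lt_def.mp hji), rename_X, Function.update_of_ne hji.ne]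
      exact congrArg X (Fin.succAbove_castPred_of_lt i j hji)
    · rw [dif_neg (lt_irrefl (j : ℕ)), dif_pos rfl, Function.update_self]
      cases ε <;> simp
    · rw [dif_neg (not_lt.mpr (Fin.le_def.mp hij.le)), dif_neg hij.ne', rename_X,
        Function.update_of_ne hij.ne']
      exact congrArg X (Fin.succAbove_pred_of_lt i j hij)
  · exact Subtype.ext (map_preimageSuccAbove h)

lemma faceEval_succAbove_cubeDegen (j : Fin (m + 2)) (i : Fin (m + 1)) (ε : Bool)
    (ω : CubeForm k (m + 1) q) {T : {S : Finset (Fin (m + 2)) // S.card = q}}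
    (hj : j ∉ T.1) (hi : j.succAbove i ∉ T.1) :
    faceEval (j.succAbove i) ε (cubeDegen j ω T) =
      cubeDegen j (cubeDegen i (cubeFace i ε ω)) T := by
  have hi' : i ∉ preimageSuccAbove j T.1 := by simpa [preimageSuccAbove] using hi
  rw [cubeDegen_of_notMem hj, cubeDegen_of_notMem hj,
    faceEval_rename Fin.succAbove_right_injective, cubeDegen_cubeFace hi']

lemma cubeDegen_cubeDegen_swap (j : Fin (m + 2)) (i : Fin (m + 1)) (ω : CubeForm k m q)
    {T : {S : Finset (Fin (m + 2)) // S.card = q}} (hj : j ∉ T.1) (hi : j.succAbove i ∉ T.1) :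
    cubeDegen j (cubeDegen i ω) T =
      cubeDegen (j.succAbove i) (cubeDegen (i.predAbove j) ω) T := by
  have hcomp : j.succAbove ∘ i.succAbove =
      (j.succAbove i).succAbove ∘ (i.predAbove j).succAbove :=
    funext fun s => (Fin.succAbove_succAbove_succAbove_predAbove j i s).symm
  have hi' : i ∉ preimageSuccAbove j T.1 := by simpa [preimageSuccAbove] using hi
  have hj' : i.predAbove j ∉ preimageSuccAbove (j.succAbove i) T.1 := by
    simpa [preimageSuccAbove, Fin.succAbove_succAbove_predAbove] using hj
  rw [cubeDegen_of_notMem hj, cubeDegen_of_notMem hi, cubeDegen_of_notMem hi',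
    cubeDegen_of_notMem hj', rename_rename, rename_rename, hcomp]
  congr 2
  ext s
  simpa [preimageSuccAbove] using congrArg (· ∈ T.1) (congrFun hcomp s)

lemma faceEval_cubeDegen_comm (j : Fin (m + 2)) (i : Fin (m + 1)) {ε₁ ε₂ : Bool}
    {ω₁ ω₂ : CubeForm k (m + 1) q} (h : cubeFace i ε₁ ω₂ = cubeFace (i.predAbove j) ε₂ ω₁)
    {T : {S : Finset (Fin (m + 2)) // S.card = q}} (hj : j ∉ T.1) (hi : j.succAbove i ∉ T.1) :
    faceEval (j.succAbove i) ε₁ (cubeDegen j ω₂ T) =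
      faceEval j ε₂ (cubeDegen (j.succAbove i) ω₁ T) := by
  have hj' := Fin.succAbove_succAbove_predAbove j i
  have hface := faceEval_succAbove_cubeDegen _ _ ε₂ ω₁ hi (by rwa [hj'])
  rw [hj'] at hface
  rw [faceEval_succAbove_cubeDegen j i ε₁ ω₂ hj hi, h, cubeDegen_cubeDegen_swap j i _ hj hi,
    hface]

lemma faceEval_cubeDegen_boundary_comm (x : Fin (m + 2) → Bool → CubeForm k (m + 1) q)
    (compat : ∀ (i j : Fin (m + 2)) (hij : i < j) (ε₁ ε₂ : Bool),
      cubeFace (i.castPred (hij.trans_le j.le_last).ne) ε₁ (x j ε₂) =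
        cubeFace (j.pred (i.zero_le.trans_lt hij).ne') ε₂ (x i ε₁))
    {T : {S : Finset (Fin (m + 2)) // S.card = q}} {i j : Fin (m + 2)} (hij : i ≠ j)
    (hi : i ∉ T.1) (hj : j ∉ T.1) (ε₁ ε₂ : Bool) :
    faceEval i ε₁ (cubeDegen j (x j ε₂) T) = faceEval j ε₂ (cubeDegen i (x i ε₁) T) := by
  wlog hlt : i < j generalizing i j ε₁ ε₂
  · exact (this hij.symm hj hi ε₂ ε₁ (lt_of_le_of_ne (not_lt.mp hlt) hij.symm)).symm
  have hsucc : j.succAbove (i.castPred _) = i := Fin.succAbove_castPred_of_lt j i hlt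
  have hpred : (i.castPred (hlt.trans_le j.le_last).ne).predAbove j = j.pred _ :=
    Fin.predAbove_of_castSucc_lt _ _ (by simpa using hlt)
  have h := faceEval_cubeDegen_comm j _ (hpred ▸ compat i j hlt ε₁ ε₂) hj (by rwa [hsucc])
  rwa [hsucc] at h

end CubeForm

/-- For each `q ≥ 0` the cubical abelian group `n ↦ □(n,q)` of degree-`q`
polynomial forms on the standard cubes satisfies the Kan extension property with respect
to boundary inclusions (the map `□(·,q) → *` is a trivial fibration of cubical sets):
given faces `x_i^ε ∈ □(n+1,q)` (`i ∈ Fin (n+2)`, `ε ∈ {0,1}`) satisfying the cubical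
compatibility relations `∂_i^{ε₁} x_j^{ε₂} = ∂_{j−1}^{ε₂} x_i^{ε₁}` for `i < j`, there
exists a filler `y ∈ □(n+2,q)` with `∂_i^ε y = x_i^ε` for all `i, ε`. -/
theorem cube_forms_boundary_filler
    (k : Type*) [Field k] (n q : ℕ)
    (x : Fin (n + 2) → Bool → CubeForm k (n + 1) q)
    (compat : ∀ (i j : Fin (n + 2)) (hij : (i : ℕ) < (j : ℕ)) (ε₁ ε₂ : Bool),
      cubeFace (⟨(i : ℕ), by have := j.isLt; omega⟩ : Fin (n + 1)) ε₁ (x j ε₂) =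
        cubeFace (⟨(j : ℕ) - 1, by have := j.isLt; omega⟩ : Fin (n + 1)) ε₂ (x i ε₁)) :
    ∃ y : CubeForm k (n + 2) q, ∀ (i : Fin (n + 2)) (ε : Bool), cubeFace i ε y = x i ε := by
  have hfill : ∀ T : {S : Finset (Fin (n + 2)) // S.card = q}, ∃ P, ∀ i ∉ T.1, ∀ ε,
      faceEval i ε P = cubeDegen i (x i ε) T := fun T => by
    simpa using exists_faceEval_eq T.1ᶜ (fun i ε => cubeDegen i (x i ε) T)
      (fun i _ ε ε' => faceEval_cubeDegen_self i ε' _ T)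
      (fun i hi j hj hij ε₁ ε₂ => faceEval_cubeDegen_boundary_comm x compat hij
        (Finset.mem_compl.mp hi) (Finset.mem_compl.mp hj) ε₁ ε₂)
  choose y hy using hfill
  refine ⟨y, fun i ε => cubeDegen_injective i (funext fun T => ?_)⟩
  by_cases hi : i ∈ T.1
  · simp [cubeDegen, hi]
  · rw [cubeDegen_cubeFace hi, hy T i hi]
end
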